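/- Consider the finite abstraction product game with finite nonempty sets X̂, Q, Û, Ŵ, accepting set F ⊆ Q, δ ∈ [0,1], row-stochastic transition function T̂, and nonempty set-valued map S as in the context. Define V̲_{*,n} : X̂ × Q → ℝ by V̲_{*,0}(x̂,q) = 1 if q ∈ F and 0 otherwise, and V̲_{*,n+1}(x̂,q) = 1 if q ∈ F, otherwise V̲_{*,n+1}(x̂,q) = min_{û∈Û} max_{ŵ∈Ŵ} ( (1−δ)·Σ_{x̂'∈X̂} (max_{q'∈S(q,x̂')} V̲_{*,n}(x̂',q'))·T̂(x̂,û,ŵ)(x̂') + δ ). Then for every horizon H ∈ ℕ and every (x̂,q) ∈ X̂ × Q, V̲_{*,H}(x̂,q) = min over Markov policies ρ for Player I over horizon H of the max over Markov policies λ for Player II over horizon H of V̲^{ρ,λ}_H(x̂,q), where both extrema over the finite sets of Markov policies are attained. -/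

import Mathlib

/-- Worst-case-violation cost-to-go `V̲^{ρ,λ}_n` of the finite abstraction product game under
Markov policies `ρ` (Player I) and `λ` (Player II) over horizon `H`:
`V̲^{ρ,λ}_0(x̂,q) = 1_F(q)`; `V̲^{ρ,λ}_{n+1}(x̂,q) = 1` if `q ∈ F`, otherwise
`V̲^{ρ,λ}_{n+1}(x̂,q) = (1−δ) Σ_{x̂'} (max_{q' ∈ S(q,x̂')} V̲^{ρ,λ}_n(x̂',q')) T̂(x̂,û,ŵ)(x̂') + δ`
with `û = ρ_{H−n−1}(x̂,q)` and `ŵ = λ_{H−n−1}(x̂,q,û)`. -/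
noncomputable def VlowPol {X Q U W : Type*} [Fintype X] [DecidableEq Q]
    (F : Finset Q) (δ : ℝ) (T : X → U → W → X → ℝ) (S : Q → X → Finset Q)
    (hS : ∀ (q : Q) (x' : X), (S q x').Nonempty)
    (ρ : ℕ → X → Q → U) (lam : ℕ → X → Q → U → W) (H : ℕ) : ℕ → X → Q → ℝ
  | 0 => fun _ q => if q ∈ F then 1 else 0
  | n + 1 => fun x q =>
      if q ∈ F then 1
      else (1 - δ) * (∑ x' : X,
        ((S q x').sup' (hS q x') fun q' => VlowPol F δ T S hS ρ lam H n x' q') *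
          T x (ρ (H - n - 1) x q) (lam (H - n - 1) x q (ρ (H - n - 1) x q)) x') + δ

/-- Optimal (min-max) Bellman recursion `V̲_{*,n}` of the finite abstraction product game:
`V̲_{*,0}(x̂,q) = 1_F(q)`; `V̲_{*,n+1}(x̂,q) = 1` if `q ∈ F`, otherwise
`V̲_{*,n+1}(x̂,q) = min_{û∈Û} max_{ŵ∈Ŵ} ((1−δ) Σ_{x̂'} (max_{q'∈S(q,x̂')} V̲_{*,n}(x̂',q')) T̂(x̂,û,ŵ)(x̂') + δ)`. -/
noncomputable def VlowStarGame {X Q U W : Type*} [Fintype X]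
    [Fintype U] [Nonempty U] [Fintype W] [Nonempty W] [DecidableEq Q]
    (F : Finset Q) (δ : ℝ) (T : X → U → W → X → ℝ) (S : Q → X → Finset Q)
    (hS : ∀ (q : Q) (x' : X), (S q x').Nonempty) : ℕ → X → Q → ℝ
  | 0 => fun _ q => if q ∈ F then 1 else 0
  | n + 1 => fun x q =>
      if q ∈ F then 1
      else Finset.univ.inf' Finset.univ_nonempty fun u : U =>
        Finset.univ.sup' Finset.univ_nonempty fun w : W =>
          (1 - δ) * (∑ x' : X,
            ((S q x').sup' (hS q x') fun q' => VlowStarGame F δ T S hS n x' q') * T x u w x') + δ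

/-!
Both inequalities follow by backward induction on the remaining horizon from the monotonicity
of the one-step backup in the continuation value. Player I plays, at each stage, an action
attaining the outer minimum of the Bellman recursion, so no response of Player II can exceed
`V̲_*`; against any fixed `ρ`, Player II answers each action of Player I with one attaining the
inner maximum, so the value never falls below `V̲_*`.
-/

open Finset

section Backup

variable {X Q U W : Type*} [Fintype X]

noncomputable def backup (δ : ℝ) (T : X → U → W → X → ℝ) (S : Q → X → Finset Q)
    (hS : ∀ (q : Q) (x' : X), (S q x').Nonempty) (V : X → Q → ℝ)
    (x : X) (q : Q) (u : U) (w : W) : ℝ :=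
  (1 - δ) * (∑ x' : X, ((S q x').sup' (hS q x') fun q' => V x' q') * T x u w x') + δ

noncomputable def worstCaseBackup [Fintype W] [Nonempty W] (δ : ℝ) (T : X → U → W → X → ℝ)
    (S : Q → X → Finset Q) (hS : ∀ (q : Q) (x' : X), (S q x').Nonempty) (V : X → Q → ℝ)
    (x : X) (q : Q) (u : U) : ℝ :=
  univ.sup' univ_nonempty (backup δ T S hS V x q u)

theorem backup_mono {δ : ℝ} (hδ1 : δ ≤ 1) {T : X → U → W → X → ℝ} {x : X} {u : U} {w : W}
    (hT0 : ∀ x', 0 ≤ T x u w x') (S : Q → X → Finset Q)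
    (hS : ∀ (q : Q) (x' : X), (S q x').Nonempty) {V V' : X → Q → ℝ}
    (hV : ∀ x q, V x q ≤ V' x q) (q : Q) :
    backup δ T S hS V x q u w ≤ backup δ T S hS V' x q u w := by
  have h1δ : 0 ≤ 1 - δ := sub_nonneg.mpr hδ1
  unfold backup
  gcongr with x' _ q' _
  · exact hT0 x'
  · exact hV x' q'

variable [DecidableEq Q] (F : Finset Q) (δ : ℝ) (T : X → U → W → X → ℝ)
  (S : Q → X → Finset Q) (hS : ∀ (q : Q) (x' : X), (S q x').Nonempty)

theorem VlowPol_succ (ρ : ℕ → X → Q → U) (lam : ℕ → X → Q → U → W) (H n : ℕ) (x : X) (q : Q) :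
    VlowPol F δ T S hS ρ lam H (n + 1) x q =
      if q ∈ F then 1
      else backup δ T S hS (VlowPol F δ T S hS ρ lam H n) x q (ρ (H - n - 1) x q)
        (lam (H - n - 1) x q (ρ (H - n - 1) x q)) :=
  rfl

theorem VlowStarGame_succ [Fintype U] [Nonempty U] [Fintype W] [Nonempty W]
    (n : ℕ) (x : X) (q : Q) :
    VlowStarGame F δ T S hS (n + 1) x q =
      if q ∈ F then 1
      else univ.inf' univ_nonempty (worstCaseBackup δ T S hS (VlowStarGame F δ T S hS n) x q) :=
  rfl

end Backup

section Optimality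

variable {X Q U W : Type*} [Fintype X] [Fintype U] [Nonempty U] [Fintype W] [Nonempty W]
  [DecidableEq Q] (F : Finset Q) {δ : ℝ} {T : X → U → W → X → ℝ} (S : Q → X → Finset Q)
  (hS : ∀ (q : Q) (x' : X), (S q x').Nonempty) {H : ℕ}

theorem VlowPol_le_VlowStarGame_of_minimizing (hδ1 : δ ≤ 1)
    (hT0 : ∀ (x : X) (u : U) (w : W) (x' : X), 0 ≤ T x u w x') {ρ : ℕ → X → Q → U}
    (hρ : ∀ n < H, ∀ x q, worstCaseBackup δ T S hS (VlowStarGame F δ T S hS n) x q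
      (ρ (H - n - 1) x q) = univ.inf' univ_nonempty
        (worstCaseBackup δ T S hS (VlowStarGame F δ T S hS n) x q))
    (lam : ℕ → X → Q → U → W) :
    ∀ n ≤ H, ∀ x q, VlowPol F δ T S hS ρ lam H n x q ≤ VlowStarGame F δ T S hS n x q := by
  intro n
  induction n with
  | zero => intro _ x q; rfl
  | succ n ih =>
    intro hn x q
    rw [VlowPol_succ, VlowStarGame_succ]
    split_ifs
    · rfl
    set u := ρ (H - n - 1) x q
    calc backup δ T S hS (VlowPol F δ T S hS ρ lam H n) x q u (lam (H - n - 1) x q u)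
        ≤ backup δ T S hS (VlowStarGame F δ T S hS n) x q u (lam (H - n - 1) x q u) :=
          backup_mono hδ1 (hT0 x u _) S hS (ih (by omega)) q
      _ ≤ worstCaseBackup δ T S hS (VlowStarGame F δ T S hS n) x q u :=
          le_sup' _ (mem_univ _)
      _ = _ := hρ n hn x q

theorem VlowStarGame_le_VlowPol_of_maximizing (hδ1 : δ ≤ 1)
    (hT0 : ∀ (x : X) (u : U) (w : W) (x' : X), 0 ≤ T x u w x') (ρ : ℕ → X → Q → U)
    {lam : ℕ → X → Q → U → W}
    (hlam : ∀ n < H, ∀ x q u, backup δ T S hS (VlowStarGame F δ T S hS n) x q u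
      (lam (H - n - 1) x q u) = worstCaseBackup δ T S hS (VlowStarGame F δ T S hS n) x q u) :
    ∀ n ≤ H, ∀ x q, VlowStarGame F δ T S hS n x q ≤ VlowPol F δ T S hS ρ lam H n x q := by
  intro n
  induction n with
  | zero => intro _ x q; rfl
  | succ n ih =>
    intro hn x q
    rw [VlowPol_succ, VlowStarGame_succ]
    split_ifs
    · rfl
    set u := ρ (H - n - 1) x q
    calc univ.inf' univ_nonempty (worstCaseBackup δ T S hS (VlowStarGame F δ T S hS n) x q)
        ≤ worstCaseBackup δ T S hS (VlowStarGame F δ T S hS n) x q u := inf'_le _ (mem_univ _)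
      _ = backup δ T S hS (VlowStarGame F δ T S hS n) x q u (lam (H - n - 1) x q u) :=
          (hlam n hn x q u).symm
      _ ≤ backup δ T S hS (VlowPol F δ T S hS ρ lam H n) x q u (lam (H - n - 1) x q u) :=
          backup_mono hδ1 (hT0 x u _) S hS (ih (by omega)) q

end Optimality

section Existence

variable {X Q U W : Type*} [Fintype X] [Fintype U] [Nonempty U] [Fintype W] [Nonempty W]
  [DecidableEq Q] (F : Finset Q) (δ : ℝ) (T : X → U → W → X → ℝ) (S : Q → X → Finset Q)
  (hS : ∀ (q : Q) (x' : X), (S q x').Nonempty) (H : ℕ)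

theorem exists_minimizing_policy : ∃ ρ : ℕ → X → Q → U, ∀ n < H, ∀ x q,
    worstCaseBackup δ T S hS (VlowStarGame F δ T S hS n) x q (ρ (H - n - 1) x q) =
      univ.inf' univ_nonempty (worstCaseBackup δ T S hS (VlowStarGame F δ T S hS n) x q) := by
  choose ρ _ hρ using fun k (x : X) (q : Q) => exists_mem_eq_inf' univ_nonempty
    (worstCaseBackup δ T S hS (VlowStarGame F δ T S hS (H - k - 1)) x q)
  refine ⟨ρ, fun n hn x q => ?_⟩
  have h := (hρ (H - n - 1) x q).symm
  rwa [show H - (H - n - 1) - 1 = n by omega] at h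

theorem exists_maximizing_response : ∃ lam : ℕ → X → Q → U → W, ∀ n < H, ∀ x q u,
    backup δ T S hS (VlowStarGame F δ T S hS n) x q u (lam (H - n - 1) x q u) =
      worstCaseBackup δ T S hS (VlowStarGame F δ T S hS n) x q u := by
  choose lam _ hlam using fun k (x : X) (q : Q) (u : U) => exists_mem_eq_sup' univ_nonempty
    (backup δ T S hS (VlowStarGame F δ T S hS (H - k - 1)) x q u)
  refine ⟨lam, fun n hn x q u => ?_⟩
  have h := (hlam (H - n - 1) x q u).symm
  rwa [show H - (H - n - 1) - 1 = n by omega] at h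

end Existence

theorem VlowStarGame_eq_minmax_general
    {X Q U W : Type*} [Fintype X] [Fintype U] [Fintype W]
    [Nonempty U] [Nonempty W] [DecidableEq Q]
    (F : Finset Q) (δ : ℝ) (hδ1 : δ ≤ 1)
    (T : X → U → W → X → ℝ) (S : Q → X → Finset Q)
    (hS : ∀ (q : Q) (x' : X), (S q x').Nonempty)
    (hT0 : ∀ (x : X) (u : U) (w : W) (x' : X), 0 ≤ T x u w x') :
    ∀ (H : ℕ) (x : X) (q : Q),
      (∃ ρ : ℕ → X → Q → U, ∀ lam : ℕ → X → Q → U → W,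
          VlowPol F δ T S hS ρ lam H H x q ≤ VlowStarGame F δ T S hS H x q) ∧
      (∀ ρ : ℕ → X → Q → U, ∃ lam : ℕ → X → Q → U → W,
          VlowStarGame F δ T S hS H x q ≤ VlowPol F δ T S hS ρ lam H H x q) := by
  intro H x q
  constructor
  · obtain ⟨ρ, hρ⟩ := exists_minimizing_policy F δ T S hS H
    exact ⟨ρ, fun lam =>
      VlowPol_le_VlowStarGame_of_minimizing F S hS hδ1 hT0 hρ lam H le_rfl x q⟩
  · intro ρ
    obtain ⟨lam, hlam⟩ := exists_maximizing_response F δ T S hS H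
    exact ⟨lam, VlowStarGame_le_VlowPol_of_maximizing F S hS hδ1 hT0 ρ hlam H le_rfl x q⟩

/-- For every horizon `H` and every `(x̂,q)`, the value `V̲_{*,H}(x̂,q)` of the
min-max Bellman recursion equals the min over Markov policies `ρ` of Player I of the max over
Markov policies `λ` of Player II of `V̲^{ρ,λ}_H(x̂,q)`, both extrema being attained: there is a
policy `ρ` whose worst-case value against every `λ` is at most `V̲_{*,H}(x̂,q)`, and against
every `ρ` Player II has a policy `λ` pushing the value up to at least `V̲_{*,H}(x̂,q)`. -/
theorem VlowStarGame_eq_minmax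
    {X Q U W : Type*} [Fintype X] [Fintype Q] [Fintype U] [Fintype W]
    [Nonempty X] [Nonempty Q] [Nonempty U] [Nonempty W] [DecidableEq Q]
    (F : Finset Q) (δ : ℝ) (hδ0 : 0 ≤ δ) (hδ1 : δ ≤ 1)
    (T : X → U → W → X → ℝ) (S : Q → X → Finset Q)
    (hS : ∀ (q : Q) (x' : X), (S q x').Nonempty)
    (hT0 : ∀ (x : X) (u : U) (w : W) (x' : X), 0 ≤ T x u w x')
    (hT1 : ∀ (x : X) (u : U) (w : W), ∑ x' : X, T x u w x' = 1) :
    ∀ (H : ℕ) (x : X) (q : Q),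
      (∃ ρ : ℕ → X → Q → U, ∀ lam : ℕ → X → Q → U → W,
          VlowPol F δ T S hS ρ lam H H x q ≤ VlowStarGame F δ T S hS H x q) ∧
      (∀ ρ : ℕ → X → Q → U, ∃ lam : ℕ → X → Q → U → W,
          VlowStarGame F δ T S hS H x q ≤ VlowPol F δ T S hS ρ lam H H x q) :=
  VlowStarGame_eq_minmax_general F δ hδ1 T S hS hT0
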